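/- With the data E₀, E₁, π₀, π₁, U, T₀, T₁, N₀, N₁ and V(T₀,T₁) as in the context, and assuming π₀(N₀) ⊆ T₀ and π₁(N₁) ⊆ T₁: the double Ω-orthogonal satisfies ( V(T₀,T₁)^⊥ )^⊥ = V(T₀,T₁). -/

import Mathlib

open MeasureTheory Set

/-- An element of `W(E)`: a pair `(λ, φ)` of continuous maps on `[0,1]` with values in `E`
and in the dual `E* = E →L[ℝ] ℝ` respectively. -/
structure WPair (E : Type*) [NormedAddCommGroup E] [NormedSpace ℝ E] where
  lam : ℝ → E
  phi : ℝ → E →L[ℝ] ℝ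
  lam_cont : ContinuousOn lam (Icc 0 1)
  phi_cont : ContinuousOn phi (Icc 0 1)

/-- The alternating bilinear form `Ω((λ,φ),(λ',φ')) = ∫₀¹ (φ(u)(λ'(u)) − φ'(u)(λ(u))) du`. -/
noncomputable def Omega {E : Type*} [NormedAddCommGroup E] [NormedSpace ℝ E]
    (w w' : WPair E) : ℝ :=
  ∫ u in (0:ℝ)..(1:ℝ), (w.phi u (w'.lam u) - w'.phi u (w.lam u))

/-- The `Ω`-orthogonal of a subset of `W(E)`. -/
def orth {E : Type*} [NormedAddCommGroup E] [NormedSpace ℝ E] (A : Set (WPair E)) :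
    Set (WPair E) :=
  {w | ∀ a ∈ A, Omega a w = 0}

/-- The annihilator `N = { α ∈ E* : α vanishes on T }` of a subspace `T ⊆ E`. -/
def Ann {E : Type*} [NormedAddCommGroup E] [NormedSpace ℝ E] (T : Submodule ℝ E) :
    Set (E →L[ℝ] ℝ) :=
  {α | ∀ v ∈ T, α v = 0}

/-- The space `V(T₀,T₁)` of solutions `(λ,φ)` of `λ(u) = λ(0) − π₀ ∫₀ᵘ φ` with boundary
conditions `λ(0) ∈ T₀` and `U⁻¹(λ(1)) ∈ T₁`. -/
noncomputable def VSet {E₀ E₁ : Type*}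
    [NormedAddCommGroup E₀] [NormedSpace ℝ E₀]
    [NormedAddCommGroup E₁] [NormedSpace ℝ E₁]
    (π₀ : (E₀ →L[ℝ] ℝ) →ₗ[ℝ] E₀) (U : E₁ ≃L[ℝ] E₀)
    (T₀ : Submodule ℝ E₀) (T₁ : Submodule ℝ E₁) : Set (WPair E₀) :=
  {w | (∀ u ∈ Icc (0:ℝ) 1, w.lam u = w.lam 0 - π₀ (∫ s in (0:ℝ)..u, w.phi s)) ∧
       w.lam 0 ∈ T₀ ∧ U.symm (w.lam 1) ∈ T₁}

/-!
For a solution `w` of `λ' = -π φ` and any `z`, integrating by parts against the skew map `π`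
gives `Ω(w, z) = ∫₀¹ φ_w(λ_z + π ∫₀ᵘ φ_z) - (∫₀¹ φ_z)(λ_w(1))`. Testing `z ∈ V^⊥⊥` against the
solutions `(-π ∫₀ᵘ ψ, ψ)` with `∫₀¹ ψ = 0`, which lie in `V^⊥`, the du Bois-Reymond lemma makes
`λ_z + π ∫₀ᵘ φ_z` constant, so `z` solves the equation. For two solutions this formula becomes
`Ω(w, z) = ω((λ_z(0), ∫₀¹ φ_z), (λ_w(1), ∫₀¹ φ_w))` with `ω` the canonical symplectic form on
`E × E*`, and every pair is the terminal data `(λ_w(1), ∫₀¹ φ_w)` of some solution `w`. Hence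
the data `(λ_z(0), ∫₀¹ φ_z)` lie in the double `ω`-orthogonal of the linear subspace cut out by
the boundary conditions, which is that subspace because `ω` is nondegenerate.
-/

section SymplecticPairing

variable (E : Type*) [NormedAddCommGroup E] [NormedSpace ℝ E]

def symplecticPairing : LinearMap.BilinForm ℝ (E × (E →L[ℝ] ℝ)) :=
  LinearMap.mk₂ ℝ (fun x y => y.2 x.1 - x.2 y.1)
    (fun _ _ _ => by simp only [Prod.fst_add, Prod.snd_add, map_add, add_apply]; ring)
    (fun _ _ _ => by
      simp only [Prod.smul_fst, Prod.smul_snd, map_smul, smul_apply, smul_eq_mul]; ring)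
    (fun _ _ _ => by simp only [Prod.fst_add, Prod.snd_add, map_add, add_apply]; ring)
    (fun _ _ _ => by
      simp only [Prod.smul_fst, Prod.smul_snd, map_smul, smul_apply, smul_eq_mul]; ring)

variable {E}

@[simp]
lemma symplecticPairing_apply (x y : E × (E →L[ℝ] ℝ)) :
    symplecticPairing E x y = y.2 x.1 - x.2 y.1 := rfl

lemma symplecticPairing_isRefl : (symplecticPairing E).IsRefl := fun x y h => by
  simp only [symplecticPairing_apply] at h ⊢
  linarith

lemma symplecticPairing_nondegenerate : (symplecticPairing E).Nondegenerate := by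
  refine (LinearMap.IsRefl.nondegenerate_iff_separatingLeft
    (B := symplecticPairing E) symplecticPairing_isRefl).2 fun ⟨a, α⟩ h => ?_
  have ha : a = 0 := SeparatingDual.eq_zero_of_forall_dual_eq_zero (R := ℝ) fun β => by
    simpa using h (0, β)
  have hα : α = 0 := ContinuousLinearMap.ext fun b => by simpa using h (b, 0)
  simp [ha, hα]

end SymplecticPairing

section Primitive

variable {F : Type*} [NormedAddCommGroup F] [NormedSpace ℝ F] {φ : ℝ → F} {a b : ℝ}

lemma ContinuousOn.continuousOn_primitive_Icc (hφ : ContinuousOn φ (Icc a b)) :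
    ContinuousOn (fun u => ∫ s in a..u, φ s) (Icc a b) := by
  rcases le_or_gt a b with hab | hba
  · simpa [uIcc_of_le hab] using
      intervalIntegral.continuousOn_primitive_interval (μ := volume) (a := a) (b := b)
        (by simpa [uIcc_of_le hab] using hφ.integrableOn_Icc)
  · simp [Icc_eq_empty_of_lt hba]

lemma ContinuousOn.hasDerivAt_primitive [CompleteSpace F] (hφ : ContinuousOn φ (Icc a b))
    {x : ℝ} (hx : x ∈ Ioo a b) : HasDerivAt (fun u => ∫ s in a..u, φ s) (φ x) x :=
  intervalIntegral.integral_hasDerivAt_right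
    ((hφ.mono (Icc_subset_Icc le_rfl hx.2.le)).intervalIntegrable_of_Icc hx.1.le)
    ((hφ.mono Ioo_subset_Icc_self).stronglyMeasurableAtFilter isOpen_Ioo x hx)
    (hφ.continuousAt (Icc_mem_nhds hx.1 hx.2))

end Primitive

/-- The du Bois-Reymond lemma. -/
lemma eqOn_const_of_forall_integral_mul_eq_zero {g : ℝ → ℝ} {a b : ℝ} (hab : a < b)
    (hg : ContinuousOn g (Icc a b))
    (H : ∀ ψ : ℝ → ℝ, ContinuousOn ψ (Icc a b) → ∫ u in a..b, ψ u = 0 →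
      ∫ u in a..b, ψ u * g u = 0) :
    EqOn g (fun _ => g a) (Icc a b) := by
  obtain ⟨c, hc⟩ : ∃ c, ∫ u in a..b, (g u - c) = 0 := by
    refine ⟨(∫ u in a..b, g u) / (b - a), ?_⟩
    rw [intervalIntegral.integral_sub (hg.intervalIntegrable_of_Icc hab.le)
      intervalIntegrable_const, intervalIntegral.integral_const, smul_eq_mul]
    field_simp [sub_ne_zero.2 hab.ne']
    ring
  have hsq : ∫ u in a..b, (g u - c) ^ 2 = 0 := by
    have hmul := H (fun u => g u - c) (hg.sub continuousOn_const) hc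
    have hconst : ∫ u in a..b, (g u - c) * c = 0 := by
      rw [intervalIntegral.integral_mul_const, hc, zero_mul]
    simp_rw [sq, mul_sub (g _ - c)]
    rw [intervalIntegral.integral_sub, hmul, hconst, sub_zero]
    all_goals exact ContinuousOn.intervalIntegrable_of_Icc hab.le (by fun_prop)
  have hg_eq : ∀ u ∈ Icc a b, g u = c := by
    by_contra! ⟨u, hu, hne⟩
    exact (intervalIntegral.integral_pos hab (by fun_prop) (fun _ _ => sq_nonneg _)
      ⟨u, hu, by positivity⟩).ne' hsq
  intro u hu
  rw [hg_eq u hu, hg_eq a (left_mem_Icc.2 hab.le)]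

lemma eqOn_const_of_forall_integral_apply_eq_zero {E : Type*} [NormedAddCommGroup E]
    [NormedSpace ℝ E] {h : ℝ → E} {a b : ℝ} (hab : a < b) (hh : ContinuousOn h (Icc a b))
    (H : ∀ ψ : ℝ → E →L[ℝ] ℝ, ContinuousOn ψ (Icc a b) → ∫ u in a..b, ψ u = 0 →
      ∫ u in a..b, ψ u (h u) = 0) :
    EqOn h (fun _ => h a) (Icc a b) := fun u hu => by
  refine (SeparatingDual.eq_iff_forall_dual_eq (R := ℝ)).2 fun ℓ => ?_
  refine eqOn_const_of_forall_integral_mul_eq_zero hab (ℓ.continuous.comp_continuousOn hh)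
    (fun ψ hψ hψ0 => ?_) hu
  simpa using H (fun u => ψ u • ℓ) (hψ.smul continuousOn_const)
    (by rw [intervalIntegral.integral_smul_const, hψ0, zero_smul])

lemma integral_apply_primitive_sub_eq {E : Type*} [NormedAddCommGroup E] [NormedSpace ℝ E]
    [FiniteDimensional ℝ E] (π : (E →L[ℝ] ℝ) →ₗ[ℝ] E)
    (hskew : ∀ α β : E →L[ℝ] ℝ, α (π β) = - β (π α)) {φ ψ : ℝ → E →L[ℝ] ℝ} {a b : ℝ}
    (hab : a ≤ b) (hφ : ContinuousOn φ (Icc a b)) (hψ : ContinuousOn ψ (Icc a b)) :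
    ∫ u in a..b, (ψ u (π (∫ s in a..u, φ s)) - φ u (π (∫ s in a..u, ψ s))) =
      (∫ u in a..b, ψ u) (π (∫ u in a..b, φ u)) := by
  have hπ : Continuous π := LinearMap.continuous_of_finiteDimensional π
  have hΦ := hφ.continuousOn_primitive_Icc
  have hΨ := hψ.continuousOn_primitive_Icc
  have hderiv : ∀ x ∈ Ioo a b, HasDerivAt (fun u => (∫ s in a..u, ψ s) (π (∫ s in a..u, φ s)))
      (ψ x (π (∫ s in a..x, φ s)) - φ x (π (∫ s in a..x, ψ s))) x := fun x hx =>
    ((hψ.hasDerivAt_primitive hx).clm_apply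
      ((LinearMap.toContinuousLinearMap π).hasFDerivAt.comp_hasDerivAt x
        (hφ.hasDerivAt_primitive hx))).congr_deriv (by
          rw [LinearMap.coe_toContinuousLinearMap', hskew, Function.comp_apply]; ring)
  rw [intervalIntegral.integral_eq_sub_of_hasDerivAt_of_le hab
    (hΨ.clm_apply (hπ.comp_continuousOn hΦ)) hderiv
    (((hψ.clm_apply (hπ.comp_continuousOn hΦ)).sub
      (hφ.clm_apply (hπ.comp_continuousOn hΨ))).intervalIntegrable_of_Icc hab)]
  simp

lemma Omega_swap {E : Type*} [NormedAddCommGroup E] [NormedSpace ℝ E] (w z : WPair E) :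
    Omega w z = - Omega z w := by
  rw [Omega, Omega, ← intervalIntegral.integral_neg]
  simp only [neg_sub]

lemma subset_orth_orth {E : Type*} [NormedAddCommGroup E] [NormedSpace ℝ E]
    (A : Set (WPair E)) : A ⊆ orth (orth A) := fun v hv a ha => by
  rw [Omega_swap, ha v hv, neg_zero]

namespace WPair

variable {E : Type*} [NormedAddCommGroup E] [NormedSpace ℝ E] [FiniteDimensional ℝ E]
  {π : (E →L[ℝ] ℝ) →ₗ[ℝ] E}

def IsSolution (π : (E →L[ℝ] ℝ) →ₗ[ℝ] E) (w : WPair E) : Prop :=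
  ∀ u ∈ Icc (0:ℝ) 1, w.lam u = w.lam 0 - π (∫ s in (0:ℝ)..u, w.phi s)

noncomputable def boundaryData (w : WPair E) : E × (E →L[ℝ] ℝ) :=
  (w.lam 0, ∫ u in (0:ℝ)..1, w.phi u)

noncomputable def solution (π : (E →L[ℝ] ℝ) →ₗ[ℝ] E) (x : E) (ψ : ℝ → E →L[ℝ] ℝ)
    (hψ : ContinuousOn ψ (Icc 0 1)) : WPair E where
  lam u := x - π (∫ s in (0:ℝ)..u, ψ s)
  phi := ψ
  lam_cont := continuousOn_const.sub
    ((LinearMap.continuous_of_finiteDimensional π).comp_continuousOn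
      hψ.continuousOn_primitive_Icc)
  phi_cont := hψ

lemma isSolution_solution (x : E) {ψ : ℝ → E →L[ℝ] ℝ} (hψ : ContinuousOn ψ (Icc 0 1)) :
    (solution π x ψ hψ).IsSolution π := fun u _ => by
  simp [solution]

lemma Omega_eq_of_isSolution_left (hskew : ∀ α β : E →L[ℝ] ℝ, α (π β) = - β (π α))
    {w : WPair E} (hw : w.IsSolution π) (z : WPair E) :
    Omega w z = (∫ u in (0:ℝ)..1, w.phi u (z.lam u + π (∫ s in (0:ℝ)..u, z.phi s)))
      - (∫ u in (0:ℝ)..1, z.phi u) (w.lam 1) := by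
  have hπ : Continuous π := LinearMap.continuous_of_finiteDimensional π
  have hΦw := w.phi_cont.continuousOn_primitive_Icc
  have hΦz := z.phi_cont.continuousOn_primitive_Icc
  have hmain : ContinuousOn (fun u => w.phi u (z.lam u + π (∫ s in (0:ℝ)..u, z.phi s)))
      (Icc 0 1) :=
    w.phi_cont.clm_apply (z.lam_cont.add (hπ.comp_continuousOn hΦz))
  have hinit : ContinuousOn (fun u => z.phi u (w.lam 0)) (Icc 0 1) :=
    z.phi_cont.clm_apply continuousOn_const
  have hskewPart : ContinuousOn (fun u => z.phi u (π (∫ s in (0:ℝ)..u, w.phi s))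
      - w.phi u (π (∫ s in (0:ℝ)..u, z.phi s))) (Icc 0 1) :=
    (z.phi_cont.clm_apply (hπ.comp_continuousOn hΦw)).sub
      (w.phi_cont.clm_apply (hπ.comp_continuousOn hΦz))
  have hsplit : EqOn (fun u => w.phi u (z.lam u) - z.phi u (w.lam u))
      (fun u => (w.phi u (z.lam u + π (∫ s in (0:ℝ)..u, z.phi s)) - z.phi u (w.lam 0))
        + (z.phi u (π (∫ s in (0:ℝ)..u, w.phi s)) - w.phi u (π (∫ s in (0:ℝ)..u, z.phi s))))
      (uIcc 0 1) := fun u hu => by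
    rw [uIcc_of_le zero_le_one] at hu
    simp only [hw u hu, map_add, map_sub]
    ring
  rw [Omega, intervalIntegral.integral_congr hsplit, intervalIntegral.integral_add,
    intervalIntegral.integral_sub, integral_apply_primitive_sub_eq π hskew zero_le_one
      w.phi_cont z.phi_cont, ← ContinuousLinearMap.intervalIntegral_apply,
    hw 1 (right_mem_Icc.2 zero_le_one)]
  · simp only [map_sub]
    ring
  exacts [z.phi_cont.intervalIntegrable_of_Icc zero_le_one,
    hmain.intervalIntegrable_of_Icc zero_le_one, hinit.intervalIntegrable_of_Icc zero_le_one,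
    (hmain.sub hinit).intervalIntegrable_of_Icc zero_le_one,
    hskewPart.intervalIntegrable_of_Icc zero_le_one]

lemma Omega_eq_of_isSolution (hskew : ∀ α β : E →L[ℝ] ℝ, α (π β) = - β (π α))
    {w z : WPair E} (hw : w.IsSolution π) (hz : z.IsSolution π) :
    Omega w z = symplecticPairing E z.boundaryData (w.lam 1, ∫ u in (0:ℝ)..1, w.phi u) := by
  rw [Omega_eq_of_isSolution_left hskew hw, symplecticPairing_apply,
    ContinuousLinearMap.intervalIntegral_apply (w.phi_cont.intervalIntegrable_of_Icc zero_le_one)]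
  congr 1
  refine intervalIntegral.integral_congr fun u hu => ?_
  rw [uIcc_of_le zero_le_one] at hu
  simp only [boundaryData, hz u hu, sub_add_cancel]

lemma IsSolution.of_mem_orth_orth (hskew : ∀ α β : E →L[ℝ] ℝ, α (π β) = - β (π α))
    {A : Set (WPair E)} (hA : ∀ v ∈ A, v.IsSolution π) {z : WPair E}
    (hz : z ∈ orth (orth A)) : z.IsSolution π := by
  have hπ : Continuous π := LinearMap.continuous_of_finiteDimensional π
  have hconst := eqOn_const_of_forall_integral_apply_eq_zero zero_lt_one
    (z.lam_cont.add (hπ.comp_continuousOn z.phi_cont.continuousOn_primitive_Icc))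
    fun ψ hψ hψ0 => ?_
  · intro u hu
    simpa [eq_sub_iff_add_eq] using hconst hu
  have hw : solution π 0 ψ hψ ∈ orth A := fun v hv => by
    rw [Omega_eq_of_isSolution hskew (hA v hv) (isSolution_solution 0 hψ)]
    simp [solution, boundaryData, hψ0]
  have h := hz _ hw
  rw [Omega_eq_of_isSolution_left hskew (isSolution_solution 0 hψ)] at h
  simpa [solution, hψ0] using h

lemma boundaryData_mem_of_mem_orth_orth (hskew : ∀ α β : E →L[ℝ] ℝ, α (π β) = - β (π α))
    {A : Set (WPair E)} (hA : ∀ v ∈ A, v.IsSolution π)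
    {S : Submodule ℝ (E × (E →L[ℝ] ℝ))} (hAS : ∀ v ∈ A, v.boundaryData ∈ S)
    {z : WPair E} (hz : z ∈ orth (orth A)) (hzs : z.IsSolution π) : z.boundaryData ∈ S := by
  rw [← (symplecticPairing E).orthogonal_orthogonal symplecticPairing_nondegenerate
    symplecticPairing_isRefl S, LinearMap.BilinForm.mem_orthogonal_iff]
  rintro y hy
  rw [LinearMap.BilinForm.mem_orthogonal_iff] at hy
  set w := solution π (y.1 + π y.2) (fun _ => y.2) continuousOn_const
  have hw : w.IsSolution π := isSolution_solution _ _
  have hwy : (w.lam 1, ∫ u in (0:ℝ)..1, w.phi u) = y := by simp [w, solution]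
  have hworth : w ∈ orth A := fun v hv => by
    rw [Omega_swap, Omega_eq_of_isSolution hskew hw (hA v hv), hwy, hy _ (hAS v hv), neg_zero]
  have hwz := hz w hworth
  rw [Omega_eq_of_isSolution hskew hw hzs, hwy] at hwz
  exact symplecticPairing_isRefl _ _ hwz

end WPair

def boundarySubspace {E₀ E₁ : Type*} [NormedAddCommGroup E₀] [NormedSpace ℝ E₀]
    [NormedAddCommGroup E₁] [NormedSpace ℝ E₁]
    (π₀ : (E₀ →L[ℝ] ℝ) →ₗ[ℝ] E₀) (U : E₁ ≃L[ℝ] E₀) (T₀ : Submodule ℝ E₀)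
    (T₁ : Submodule ℝ E₁) : Submodule ℝ (E₀ × (E₀ →L[ℝ] ℝ)) :=
  T₀.comap (LinearMap.fst ℝ _ _) ⊓
    T₁.comap ((U.symm : E₀ →L[ℝ] E₁).toLinearMap ∘ₗ
      (LinearMap.fst ℝ _ _ - π₀ ∘ₗ LinearMap.snd ℝ _ _))

lemma mem_VSet_iff {E₀ E₁ : Type*} [NormedAddCommGroup E₀] [NormedSpace ℝ E₀]
    [NormedAddCommGroup E₁] [NormedSpace ℝ E₁]
    {π₀ : (E₀ →L[ℝ] ℝ) →ₗ[ℝ] E₀} {U : E₁ ≃L[ℝ] E₀} {T₀ : Submodule ℝ E₀}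
    {T₁ : Submodule ℝ E₁} {w : WPair E₀} :
    w ∈ VSet π₀ U T₀ T₁ ↔ w.IsSolution π₀ ∧ w.boundaryData ∈ boundarySubspace π₀ U T₀ T₁ := by
  refine and_congr_right fun hw => ?_
  rw [hw 1 (right_mem_Icc.2 zero_le_one)]
  simp [boundarySubspace, WPair.boundaryData]

theorem double_orth_VSet_general
    (E₀ E₁ : Type*)
    [NormedAddCommGroup E₀] [NormedSpace ℝ E₀] [FiniteDimensional ℝ E₀]
    [NormedAddCommGroup E₁] [NormedSpace ℝ E₁]
    (π₀ : (E₀ →L[ℝ] ℝ) →ₗ[ℝ] E₀)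
    (hskew₀ : ∀ α β : E₀ →L[ℝ] ℝ, α (π₀ β) = - β (π₀ α))
    (U : E₁ ≃L[ℝ] E₀)
    (T₀ : Submodule ℝ E₀) (T₁ : Submodule ℝ E₁) :
    orth (orth (VSet π₀ U T₀ T₁)) = VSet π₀ U T₀ T₁ := by
  refine (subset_orth_orth _).antisymm' fun z hz => ?_
  have hsol : ∀ v ∈ VSet π₀ U T₀ T₁, v.IsSolution π₀ := fun v hv => (mem_VSet_iff.1 hv).1
  have hz_sol := WPair.IsSolution.of_mem_orth_orth hskew₀ hsol hz
  exact mem_VSet_iff.2 ⟨hz_sol, WPair.boundaryData_mem_of_mem_orth_orth hskew₀ hsol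
    (fun v hv => (mem_VSet_iff.1 hv).2) hz hz_sol⟩

theorem double_orth_VSet
    (E₀ E₁ : Type*)
    [NormedAddCommGroup E₀] [NormedSpace ℝ E₀] [FiniteDimensional ℝ E₀]
    [NormedAddCommGroup E₁] [NormedSpace ℝ E₁] [FiniteDimensional ℝ E₁]
    (π₀ : (E₀ →L[ℝ] ℝ) →ₗ[ℝ] E₀) (π₁ : (E₁ →L[ℝ] ℝ) →ₗ[ℝ] E₁)
    (hskew₀ : ∀ α β : E₀ →L[ℝ] ℝ, α (π₀ β) = - β (π₀ α))
    (hskew₁ : ∀ α β : E₁ →L[ℝ] ℝ, α (π₁ β) = - β (π₁ α))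
    (U : E₁ ≃L[ℝ] E₀)
    (hU : ∀ α : E₀ →L[ℝ] ℝ, U (π₁ (α.comp (U : E₁ →L[ℝ] E₀))) = π₀ α)
    (T₀ : Submodule ℝ E₀) (T₁ : Submodule ℝ E₁)
    (hT₀ : ∀ α ∈ Ann T₀, π₀ α ∈ T₀) (hT₁ : ∀ α ∈ Ann T₁, π₁ α ∈ T₁) :
    orth (orth (VSet π₀ U T₀ T₁)) = VSet π₀ U T₀ T₁ :=
  double_orth_VSet_general E₀ E₁ π₀ hskew₀ U T₀ T₁
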